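/- arXiv:1610.04167 — 4 statements merged into one kernel-verified Lean document; each statement's English description precedes it below -/
import Mathlib

section
/- If the missingness distribution Q is MAR, then the marginalized Bayes predictor h*(x⊙m) = argmax_{y∈[K]} P(Y=y | o(x,m)) is optimal with respect to expected 0-1 loss: for every predictor h (a function of the observed masked input x⊙m only), P(h(X⊙M)=Y) ≤ P(h*(X⊙M)=Y). In particular, optimal classification under MAR missingness does not require knowledge of Q. -/
open Finset

/-! Fix a mask `m` and group the inputs `x` into the classes of the relation "agrees with `x` on
the coordinates observed under `m`". Under MAR the weight `Q x m` is constant on each class, and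
so is any predictor, so the accuracy contributed by a class is `Q x m` times the joint probability
`P(Y = ŷ, o(x, m))` of the predicted label `ŷ`; the marginalized Bayes predictor maximizes this
class by class, whatever `Q` is. -/

section ClassSums

variable {α : Type*} [Fintype α] {r : α → α → Prop} [DecidableRel r]

theorem sum_le_sum_of_forall_class_sum_le (hr : Equivalence r) {f g : α → ℝ}
    (hfg : ∀ x, (∑ x', if r x x' then f x' else 0) ≤ ∑ x', if r x x' then g x' else 0) :
    ∑ x, f x ≤ ∑ x, g x := by
  classical
  let S : Setoid α := ⟨r, hr⟩
  have hclass : ∀ (φ : α → ℝ) (x : α),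
      (∑ x' ∈ univ.filter (fun x' => (⟦x'⟧ : Quotient S) = ⟦x⟧), φ x')
        = ∑ x', if r x x' then φ x' else 0 := by
    intro φ x
    rw [sum_filter]
    refine sum_congr rfl fun x' _ => ?_
    have hiff : (⟦x'⟧ : Quotient S) = ⟦x⟧ ↔ r x x' := Quotient.eq.trans ⟨hr.symm, hr.symm⟩
    by_cases hx : r x x' <;> simp [hiff, hx]
  rw [← sum_fiberwise univ (fun x => (⟦x⟧ : Quotient S)) f,
    ← sum_fiberwise univ (fun x => (⟦x⟧ : Quotient S)) g]
  refine sum_le_sum fun q _ => ?_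
  induction q using Quotient.inductionOn with
  | h x => simpa only [hclass] using hfg x

theorem class_sum_mul_of_invariant {β : Type*} {q : α → ℝ} {g : α → β} (F : α → β → ℝ)
    (hq : ∀ x x', r x x' → q x = q x') (hg : ∀ x x', r x x' → g x = g x') (x : α) :
    (∑ x', if r x x' then q x' * F x' (g x') else 0)
      = q x * ∑ x', if r x x' then F x' (g x) else 0 := by
  rw [mul_sum]
  refine sum_congr rfl fun x' _ => ?_
  split_ifs with hx
  · rw [hq x x' hx, hg x x' hx]
  · rw [mul_zero]

end ClassSums

theorem equivalence_agreeOn {ι V : Type*} (m : ι → Bool) :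
    Equivalence (fun x x' : ι → V => ∀ i, m i = true → x i = x' i) where
  refl _ _ _ := rfl
  symm h i hi := (h i hi).symm
  trans h h' i hi := (h i hi).trans (h' i hi)

theorem le_of_div_le_div_of_le {a b d : ℝ} (had : a ≤ d) (hb : 0 ≤ b) (h : a / d ≤ b / d) :
    a ≤ b := by
  rcases le_or_gt d 0 with hd | hd
  · -- `d = 0` makes `h` the junk inequality `0 ≤ 0`; then `a ≤ d` alone gives the claim
    linarith
  · exact (div_le_div_iff_of_pos_right hd).mp h

theorem sum_sum_sum_mul_ite_eq {X M K : Type*} [Fintype X] [Fintype M] [Fintype K]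
    [DecidableEq K] (D : X × K → ℝ) (Q : X → M → ℝ) (g : M → X → K) :
    (∑ x : X, ∑ y : K, ∑ m : M, D (x, y) * Q x m * (if g m x = y then 1 else 0))
      = ∑ m, ∑ x, Q x m * D (x, g m x) := by
  refine (sum_congr rfl fun x _ => ?_).trans sum_comm
  rw [sum_comm]
  refine sum_congr rfl fun m _ => ?_
  simp [mul_comm]

theorem sum_ite_le_sum_prod_ite {X K : Type*} [Fintype X] [Fintype K] {D : X × K → ℝ}
    (hD0 : ∀ p, 0 ≤ D p) (P : X → Prop) [DecidablePred P] (y : K) :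
    (∑ x, if P x then D (x, y) else 0) ≤ ∑ p : X × K, if P p.1 then D p else 0 := by
  rw [Fintype.sum_prod_type]
  refine sum_le_sum fun x _ => ?_
  split_ifs
  · exact single_le_sum (fun y' _ => hD0 (x, y')) (mem_univ y)
  · simp

theorem statement1_general
    {V : Type} [Fintype V] [DecidableEq V] {s K : ℕ}
    (D : (Fin s → V) × Fin K → ℝ)
    (hD0 : ∀ p, 0 ≤ D p)
    (Q : (Fin s → V) → (Fin s → Bool) → ℝ)
    (hQ0 : ∀ x m, 0 ≤ Q x m)
    -- Q is MAR: it depends only on the mask and the observed coordinates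
    (hMAR : ∀ m x x', (∀ i, m i = true → x i = x' i) → Q x m = Q x' m)
    (hstar h : (Fin s → Bool) → (Fin s → V) → Fin K)
    -- predictors depend only on the observed part of the masked input
    (hstar_obs : ∀ m x x', (∀ i, m i = true → x i = x' i) → hstar m x = hstar m x')
    (h_obs : ∀ m x x', (∀ i, m i = true → x i = x' i) → h m x = h m x')
    -- `hstar` is the marginalized Bayes predictor: it maximizes P(Y=y | o(x,m)) over y
    (hstar_argmax : ∀ m x y,
      (∑ x' : Fin s → V, if ∀ i, m i = true → x i = x' i then D (x', y) else 0) /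
          (∑ p : (Fin s → V) × Fin K, if ∀ i, m i = true → x i = p.1 i then D p else 0)
      ≤
      (∑ x' : Fin s → V, if ∀ i, m i = true → x i = x' i then D (x', hstar m x) else 0) /
          (∑ p : (Fin s → V) × Fin K, if ∀ i, m i = true → x i = p.1 i then D p else 0)) :
    -- accuracy of h  ≤  accuracy of hstar
    ∑ x : Fin s → V, ∑ y : Fin K, ∑ m : Fin s → Bool,
        D (x, y) * Q x m * (if h m x = y then 1 else 0)
      ≤
    ∑ x : Fin s → V, ∑ y : Fin K, ∑ m : Fin s → Bool,
        D (x, y) * Q x m * (if hstar m x = y then 1 else 0) := by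
  rw [sum_sum_sum_mul_ite_eq, sum_sum_sum_mul_ite_eq]
  refine sum_le_sum fun m _ => sum_le_sum_of_forall_class_sum_le (equivalence_agreeOn m)
    fun x => ?_
  rw [class_sum_mul_of_invariant (fun x' y => D (x', y)) (hMAR m) (h_obs m),
    class_sum_mul_of_invariant (fun x' y => D (x', y)) (hMAR m) (hstar_obs m)]
  refine mul_le_mul_of_nonneg_left ?_ (hQ0 x m)
  refine le_of_div_le_div_of_le (sum_ite_le_sum_prod_ite hD0 _ _) ?_ (hstar_argmax m x (h m x))
  exact sum_nonneg fun x' _ => by split_ifs <;> simp [hD0]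

/-- **Optimality of the marginalized Bayes predictor under MAR missingness.**
If the missingness distribution `Q` is MAR (for every mask `m`, `Q m x` depends
only on the coordinates of `x` observed under `m`), then the marginalized Bayes
predictor `h*(x⊙m) = argmax_y P(Y=y | o(x,m))` is optimal w.r.t. expected 0-1
loss: the accuracy of any predictor `h` (depending only on the observed masked
input) is at most that of `h*`.  In particular `h*` does not require any
knowledge of `Q`. -/
theorem statement1
    {V : Type} [Fintype V] [DecidableEq V] {s K : ℕ}
    (D : (Fin s → V) × Fin K → ℝ)
    (hD0 : ∀ p, 0 ≤ D p)
    (hD1 : ∑ p : (Fin s → V) × Fin K, D p = 1)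
    (Q : (Fin s → V) → (Fin s → Bool) → ℝ)
    (hQ0 : ∀ x m, 0 ≤ Q x m)
    (hQ1 : ∀ x, ∑ m : Fin s → Bool, Q x m = 1)
    -- Q is MAR: it depends only on the mask and the observed coordinates
    (hMAR : ∀ m x x', (∀ i, m i = true → x i = x' i) → Q x m = Q x' m)
    (hstar h : (Fin s → Bool) → (Fin s → V) → Fin K)
    -- predictors depend only on the observed part of the masked input
    (hstar_obs : ∀ m x x', (∀ i, m i = true → x i = x' i) → hstar m x = hstar m x')
    (h_obs : ∀ m x x', (∀ i, m i = true → x i = x' i) → h m x = h m x')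
    -- `hstar` is the marginalized Bayes predictor: it maximizes P(Y=y | o(x,m)) over y
    (hstar_argmax : ∀ m x y,
      (∑ x' : Fin s → V, if ∀ i, m i = true → x i = x' i then D (x', y) else 0) /
          (∑ p : (Fin s → V) × Fin K, if ∀ i, m i = true → x i = p.1 i then D p else 0)
      ≤
      (∑ x' : Fin s → V, if ∀ i, m i = true → x i = x' i then D (x', hstar m x) else 0) /
          (∑ p : (Fin s → V) × Fin K, if ∀ i, m i = true → x i = p.1 i then D p else 0)) :
    -- accuracy of h  ≤  accuracy of hstar
    ∑ x : Fin s → V, ∑ y : Fin K, ∑ m : Fin s → Bool,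
        D (x, y) * Q x m * (if h m x = y then 1 else 0)
      ≤
    ∑ x : Fin s → V, ∑ y : Fin K, ∑ m : Fin s → Bool,
        D (x, y) * Q x m * (if hstar m x = y then 1 else 0) :=
  statement1_general D hD0 Q hQ0 hMAR hstar h hstar_obs h_obs hstar_argmax
end

section
/- There exists a data distribution D over 𝒳×𝒴 = {0,1}²×{0,1} and an MAR missingness distribution Q such that classification through data imputation is strictly suboptimal: every predictor of the form x⊙m ↦ argmax_y P(Y=y | X = g(x⊙m)) or x⊙m ↦ argmax_y P(Y=y | X = g(x⊙m; y)), where g(x⊙m) is a most-likely completion (argmax over completions x' agreeing with x on observed coordinates of P(X=x')) and g(x⊙m; y) is a most-likely class-conditional completion (argmax of P(X=x'|Y=y)), has accuracy less than half the accuracy of the marginalized Bayes predictor argmax_y P(Y=y | o(x,m)), with an absolute accuracy gap of more than 33 percentage points. Concretely, with ε = 10⁻⁴, the distribution D assigning (after normalization) weights 1−ε, 1, 1−ε, 1, 0, 1+ε, 0, 1+ε to the triples (x₁,x₂,y) = (0,0,0), (0,1,0), (1,0,0), (1,1,0), (0,0,1), (0,1,1), (1,0,1), (1,1,1) respectively,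 together with the missingness distribution Q that always observes X₁ and always hides X₂, yields accuracy (1+ε)/3 for both imputation-based predictors and accuracy (2−ε)/3 for the marginalized Bayes predictor. -/
open Finset

/-- ε = 10⁻⁴ -/
noncomputable def eps : ℝ := 1 / 10000

/-- The concrete data distribution `D` over `{0,1}² × {0,1}` (Table 3 of the
paper): weights 1-ε, 1, 1-ε, 1, 0, 1+ε, 0, 1+ε for
(x₁,x₂,y) = (0,0,0),(0,1,0),(1,0,0),(1,1,0),(0,0,1),(0,1,1),(1,0,1),(1,1,1),
normalized by 6. -/
noncomputable def D3 : ((Fin 2 → Bool) × Bool) → ℝ := fun p =>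
  (if p.2 then (if p.1 1 then 1 + eps else 0)
   else (if p.1 1 then 1 else 1 - eps)) / 6

/-- The mask that always observes `X₁` (coordinate 0) and always hides `X₂`
(coordinate 1). -/
def mObs : Fin 2 → Bool := ![true, false]

/-- The missingness distribution `Q`: deterministically equal to `mObs`,
independently of `x` (hence MCAR, in particular MAR). -/
noncomputable def Q3 : (Fin 2 → Bool) → (Fin 2 → Bool) → ℝ :=
  fun _ m => if m = mObs then 1 else 0

/-- Accuracy `P(h(X⊙M) = Y)` of a predictor `h` under `D3`, `Q3`. -/
noncomputable def accuracy3 (h : (Fin 2 → Bool) → (Fin 2 → Bool) → Bool) : ℝ :=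
  ∑ x : Fin 2 → Bool, ∑ y : Bool, ∑ m : Fin 2 → Bool,
    D3 (x, y) * Q3 x m * (if h m x = y then 1 else 0)

/-!
The mask always hides `X₂`, and within each class the value `X₂ = 1` is the more likely one
(weight `1` against `1 - ε` in class 0, `1 + ε` against `0` in class 1). So every most-likely
completion, unconditional or class-conditional, fills in `X₂ = 1`; given `X₂ = 1` class 1 is
slightly more likely (`1 + ε` against `1`), so both imputation predictors always answer 1,
which is right with probability `(1 + ε)/3`. Marginalizing over the hidden `X₂` instead, class 0
has posterior `(2 - ε)/3` whatever `X₁` is, so the marginalized Bayes predictor always answers 0.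
-/

theorem Fintype.sum_fin_two_arrow {α M : Type*} [Fintype α] [AddCommMonoid M]
    (f : (Fin 2 → α) → M) : ∑ x, f x = ∑ a, ∑ b, f ![a, b] := by
  rw [← (finTwoArrowEquiv α).symm.sum_comp, Fintype.sum_prod_type]
  rfl

lemma Bool.eq_of_forall_le_of_lt {f : Bool → ℝ} {b c : Bool} (h : ∀ y, f y ≤ f b)
    (hlt : f (!c) < f c) : b = c := by
  by_contra hb
  rw [Bool.eq_not_of_ne hb] at h
  exact (h c).not_gt hlt

lemma agrees_mObs_iff {x x' : Fin 2 → Bool} :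
    (∀ i, mObs i = true → x i = x' i) ↔ x 0 = x' 0 := by
  simp [Fin.forall_fin_two, mObs]

lemma D3_of_hidden_true {x : Fin 2 → Bool} (hx : x 1 = true) (y : Bool) :
    D3 (x, y) = if y then (1 + eps) / 6 else 1 / 6 := by
  cases y <;> simp [D3, hx]

lemma D3_of_hidden_false {x : Fin 2 → Bool} (hx : x 1 = false) (y : Bool) :
    D3 (x, y) = if y then 0 else (1 - eps) / 6 := by
  cases y <;> simp [D3, hx]

lemma D3_nonneg (p : (Fin 2 → Bool) × Bool) : 0 ≤ D3 p := by
  unfold D3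
  split_ifs <;> norm_num [eps]

lemma D3_lt_of_hidden {x z : Fin 2 → Bool} (hz : z 1 = false) (hx : x 1 = true) (y : Bool) :
    D3 (z, y) < D3 (x, y) := by
  rw [D3_of_hidden_false hz, D3_of_hidden_true hx]
  cases y <;> norm_num [eps]

lemma sum_D3_label (y : Bool) :
    ∑ x, D3 (x, y) = if y then (1 + eps) / 3 else (2 - eps) / 3 := by
  rw [Fintype.sum_fin_two_arrow]
  cases y <;> simp [D3] <;> ring

lemma sum_D3_label_pos (y : Bool) : 0 < ∑ x, D3 (x, y) := by
  rw [sum_D3_label]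
  cases y <;> norm_num [eps]

lemma sum_D3_observed (x : Fin 2 → Bool) (y : Bool) :
    (∑ x' : Fin 2 → Bool, if ∀ i, mObs i = true → x i = x' i then D3 (x', y) else 0) =
      if y then (1 + eps) / 6 else (2 - eps) / 6 := by
  simp only [agrees_mObs_iff, Fintype.sum_fin_two_arrow]
  cases y <;> cases x 0 <;> simp [D3] <;> ring

lemma sum_D3 : ∑ p : (Fin 2 → Bool) × Bool, D3 p = 1 := by
  rw [Fintype.sum_prod_type_right, Fintype.sum_bool, sum_D3_label, sum_D3_label]
  simp only [Bool.false_eq_true, if_false, if_true]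
  ring

lemma hidden_eq_true_of_D3_le {x z : Fin 2 → Bool} {y : Bool} (hx : x 1 = true)
    (h : D3 (x, y) ≤ D3 (z, y)) : z 1 = true := by
  by_contra hz
  exact (D3_lt_of_hidden (Bool.eq_false_iff.2 hz) hx y).not_ge h

lemma hidden_eq_true_of_sum_D3_le {x z : Fin 2 → Bool} (hx : x 1 = true)
    (h : ∑ y, D3 (x, y) ≤ ∑ y, D3 (z, y)) : z 1 = true := by
  by_contra hz
  exact (Finset.sum_lt_sum_of_nonempty univ_nonempty
    fun y _ ↦ D3_lt_of_hidden (Bool.eq_false_iff.2 hz) hx y).not_ge h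

lemma accuracy3_eq_sum (h : (Fin 2 → Bool) → (Fin 2 → Bool) → Bool) :
    accuracy3 h = ∑ x, D3 (x, h mObs x) := by
  unfold accuracy3 Q3
  refine sum_congr rfl fun x _ ↦ ?_
  rw [sum_comm, Fintype.sum_eq_single mObs fun m hm ↦ by simp [hm]]
  simp

lemma accuracy3_of_forall_eq {h : (Fin 2 → Bool) → (Fin 2 → Bool) → Bool} {c : Bool}
    (hc : ∀ x, h mObs x = c) : accuracy3 h = if c then (1 + eps) / 3 else (2 - eps) / 3 := by
  simp only [accuracy3_eq_sum, hc, sum_D3_label]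

lemma D3_div_sum_of_hidden_true {x : Fin 2 → Bool} (hx : x 1 = true) (y : Bool) :
    D3 (x, y) / ∑ y', D3 (x, y') = if y then (1 + eps) / (2 + eps) else 1 / (2 + eps) := by
  have hsum : ∑ y', D3 (x, y') = (2 + eps) / 6 := by
    simp only [Fintype.sum_bool, D3_of_hidden_true hx]
    norm_num
    ring
  rw [hsum, D3_of_hidden_true hx]
  have hpos : (0 : ℝ) < 2 + eps := by norm_num [eps]
  cases y <;> simp <;> field_simp

lemma sum_D3_observed_total (x : Fin 2 → Bool) :
    (∑ p : (Fin 2 → Bool) × Bool, if ∀ i, mObs i = true → x i = p.1 i then D3 p else 0) =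
      1 / 2 := by
  rw [Fintype.sum_prod_type_right, Fintype.sum_bool, sum_D3_observed, sum_D3_observed]
  simp only [if_true, Bool.false_eq_true, if_false]
  ring

lemma completion_agrees (x : Fin 2 → Bool) : ∀ i, mObs i = true → x i = ![x 0, true] i :=
  agrees_mObs_iff.2 rfl

theorem accuracy3_of_mostLikely_imputation
    (g : (Fin 2 → Bool) → (Fin 2 → Bool) → (Fin 2 → Bool))
    (hU : (Fin 2 → Bool) → (Fin 2 → Bool) → Bool)
    (hg : ∀ m x x', (∀ i, m i = true → x i = x' i) →
      (∑ y : Bool, D3 (x', y)) ≤ (∑ y : Bool, D3 (g m x, y)))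
    (hbayes : ∀ m x y, D3 (g m x, y) / (∑ y' : Bool, D3 (g m x, y'))
      ≤ D3 (g m x, hU m x) / (∑ y' : Bool, D3 (g m x, y'))) :
    accuracy3 hU = (1 + eps) / 3 := by
  have hfill (x) : g mObs x 1 = true :=
    hidden_eq_true_of_sum_D3_le (x := ![x 0, true]) rfl (hg _ _ _ (completion_agrees x))
  rw [accuracy3_of_forall_eq (c := true) fun x ↦ Bool.eq_of_forall_le_of_lt (hbayes mObs x) ?_,
    if_pos rfl]
  simp only [D3_div_sum_of_hidden_true (hfill x)]
  norm_num [eps]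

theorem accuracy3_of_mostLikely_classConditional_imputation
    (g : (Fin 2 → Bool) → (Fin 2 → Bool) → Bool → (Fin 2 → Bool))
    (hC : (Fin 2 → Bool) → (Fin 2 → Bool) → Bool)
    (hg : ∀ m x x' y, (∀ i, m i = true → x i = x' i) →
      D3 (x', y) / (∑ x'' : Fin 2 → Bool, D3 (x'', y))
        ≤ D3 (g m x y, y) / (∑ x'' : Fin 2 → Bool, D3 (x'', y)))
    (hbayes : ∀ m x y, D3 (g m x y, y) / (∑ y' : Bool, D3 (g m x y, y'))
      ≤ D3 (g m x (hC m x), hC m x) / (∑ y' : Bool, D3 (g m x (hC m x), y'))) :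
    accuracy3 hC = (1 + eps) / 3 := by
  have hfill (x y) : g mObs x y 1 = true :=
    hidden_eq_true_of_D3_le (x := ![x 0, true]) rfl <|
      (div_le_div_iff_of_pos_right (sum_D3_label_pos y)).1 (hg _ _ _ y (completion_agrees x))
  rw [accuracy3_of_forall_eq (c := true) fun x ↦
    Bool.eq_of_forall_le_of_lt (f := fun y ↦ D3 (g mObs x y, y) / ∑ y', D3 (g mObs x y, y'))
      (hbayes mObs x) ?_, if_pos rfl]
  simp only [D3_div_sum_of_hidden_true (hfill x _)]
  norm_num [eps]

theorem accuracy3_of_marginalized_bayes (hB : (Fin 2 → Bool) → (Fin 2 → Bool) → Bool)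
    (hbayes : ∀ m x y,
      (∑ x' : Fin 2 → Bool, if ∀ i, m i = true → x i = x' i then D3 (x', y) else 0) /
        (∑ p : (Fin 2 → Bool) × Bool, if ∀ i, m i = true → x i = p.1 i then D3 p else 0)
      ≤
      (∑ x' : Fin 2 → Bool, if ∀ i, m i = true → x i = x' i then D3 (x', hB m x) else 0) /
        (∑ p : (Fin 2 → Bool) × Bool, if ∀ i, m i = true → x i = p.1 i then D3 p else 0)) :
    accuracy3 hB = (2 - eps) / 3 := by
  rw [accuracy3_of_forall_eq (c := false) fun x ↦ Bool.eq_of_forall_le_of_lt (hbayes mObs x) ?_,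
    if_neg Bool.false_ne_true]
  simp only [sum_D3_observed, sum_D3_observed_total]
  norm_num [eps]

/-- **Sub-optimality of classification through data imputation.**
There is a data distribution (the concrete `D3`) and an MAR missingness
distribution (the concrete `Q3`, always observing `X₁` and hiding `X₂`) such
that: every predictor obtained by most-likely data imputation followed by Bayes
prediction — whether the completion is unconditional (`argmax_{x'} P(X=x')`) or
class-conditional (`argmax_{x'} P(X=x'|Y=y)`) — has accuracy `(1+ε)/3`, whereas
the marginalized Bayes predictor `argmax_y P(Y=y | o(x,m))` has accuracy
`(2-ε)/3`, an absolute accuracy gap of more than 33 percentage points. -/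
theorem statement3 :
    -- D3 is a probability distribution
    (∀ p, 0 ≤ D3 p) ∧ (∑ p : (Fin 2 → Bool) × Bool, D3 p = 1) ∧
    -- Q3 is a missingness distribution
    (∀ x m, 0 ≤ Q3 x m) ∧ (∀ x, ∑ m : Fin 2 → Bool, Q3 x m = 1) ∧
    -- Q3 is MAR: it depends only on the mask and the observed coordinates
    (∀ m x x', (∀ i, m i = true → x i = x' i) → Q3 x m = Q3 x' m) ∧
    -- (i) classification through unconditional data imputation has accuracy (1+ε)/3
    (∀ (g : (Fin 2 → Bool) → (Fin 2 → Bool) → (Fin 2 → Bool))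
       (hU : (Fin 2 → Bool) → (Fin 2 → Bool) → Bool),
      -- g(x⊙m) agrees with x on the observed coordinates
      (∀ m x i, m i = true → g m x i = x i) →
      -- g(x⊙m) depends only on the observed masked input
      (∀ m x x', (∀ i, m i = true → x i = x' i) → g m x = g m x') →
      -- g(x⊙m) is a most likely completion: argmax over completions of P(X = x')
      (∀ m x x', (∀ i, m i = true → x i = x' i) →
        (∑ y : Bool, D3 (x', y)) ≤ (∑ y : Bool, D3 (g m x, y))) →
      -- hU(x⊙m) = argmax_y P(Y=y | X = g(x⊙m))
      (∀ m x y, D3 (g m x, y) / (∑ y' : Bool, D3 (g m x, y'))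
          ≤ D3 (g m x, hU m x) / (∑ y' : Bool, D3 (g m x, y'))) →
      accuracy3 hU = (1 + eps) / 3) ∧
    -- (ii) classification through class-conditional data imputation has accuracy (1+ε)/3
    (∀ (g : (Fin 2 → Bool) → (Fin 2 → Bool) → Bool → (Fin 2 → Bool))
       (hC : (Fin 2 → Bool) → (Fin 2 → Bool) → Bool),
      -- g(x⊙m; y) agrees with x on the observed coordinates
      (∀ m x y i, m i = true → g m x y i = x i) →
      -- g(x⊙m; y) depends only on the observed masked input
      (∀ m x x' y, (∀ i, m i = true → x i = x' i) → g m x y = g m x' y) →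
      -- g(x⊙m; y) is a most likely class-conditional completion:
      -- argmax over completions of P(X = x' | Y = y)
      (∀ m x x' y, (∀ i, m i = true → x i = x' i) →
        D3 (x', y) / (∑ x'' : Fin 2 → Bool, D3 (x'', y))
          ≤ D3 (g m x y, y) / (∑ x'' : Fin 2 → Bool, D3 (x'', y))) →
      -- hC(x⊙m) = argmax_y P(Y=y | X = g(x⊙m; y))
      (∀ m x y, D3 (g m x y, y) / (∑ y' : Bool, D3 (g m x y, y'))
          ≤ D3 (g m x (hC m x), hC m x) /
              (∑ y' : Bool, D3 (g m x (hC m x), y'))) →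
      accuracy3 hC = (1 + eps) / 3) ∧
    -- (iii) the marginalized Bayes predictor has accuracy (2-ε)/3
    (∀ hB : (Fin 2 → Bool) → (Fin 2 → Bool) → Bool,
      -- hB depends only on the observed masked input
      (∀ m x x', (∀ i, m i = true → x i = x' i) → hB m x = hB m x') →
      -- hB(x⊙m) = argmax_y P(Y=y | o(x,m))
      (∀ m x y,
        (∑ x' : Fin 2 → Bool, if ∀ i, m i = true → x i = x' i then D3 (x', y) else 0) /
            (∑ p : (Fin 2 → Bool) × Bool, if ∀ i, m i = true → x i = p.1 i then D3 p else 0)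
          ≤
        (∑ x' : Fin 2 → Bool, if ∀ i, m i = true → x i = x' i then D3 (x', hB m x) else 0) /
            (∑ p : (Fin 2 → Bool) × Bool, if ∀ i, m i = true → x i = p.1 i then D3 p else 0)) →
      accuracy3 hB = (2 - eps) / 3) ∧
    -- the absolute accuracy gap is more than 33 percentage points
    (2 - eps) / 3 - (1 + eps) / 3 > 33 / 100 := by
  refine ⟨D3_nonneg, sum_D3, fun _ _ ↦ ?_, fun _ ↦ by simp [Q3], fun _ _ _ _ ↦ rfl,
    fun g hU _ _ hg hbayes ↦ accuracy3_of_mostLikely_imputation g hU hg hbayes,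
    fun g hC _ _ hg hbayes ↦ accuracy3_of_mostLikely_classConditional_imputation g hC hg hbayes,
    fun hB _ hbayes ↦ accuracy3_of_marginalized_bayes hB hbayes, by norm_num [eps]⟩
  unfold Q3
  split_ifs <;> norm_num
end

section
/- If 𝓕 is a PDF total set of probability density functions over ℝ^s, then 𝓕^{⊗N} = { (x₁,…,x_N) ↦ ∏_{i=1}^N f_i(x_i) : f₁,…,f_N ∈ 𝓕 } is a PDF total set of probability density functions over the product space (ℝ^s)^N. -/
/-!
Products behave well on both sides of the approximation. A product of convex combinations of
elements of `F` expands into a convex combination of elements of `F^{⊗N}`, and for densities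
`‖⊗ fᵢ - ⊗ gᵢ‖₁ ≤ ∑ ‖fᵢ - gᵢ‖₁` (telescoping, each factor integrating to `1`); hence every product
of densities is an `L¹`-limit of convex combinations from `F^{⊗N}`. Conversely every density on
`(ℝ^s)^N` is an `L¹`-limit of convex combinations of product densities: approximate it by a
continuous compactly supported function, sample that on a fine grid, and observe that the
normalized indicator of a grid cube is a product of interval densities. The two approximations
compose because `L¹`-closures of convex hulls are convex and closed.
-/

open MeasureTheory Finset

/-- `f` is a probability density function w.r.t. the measure `μ`. -/
def IsPDF {α : Type*} [MeasurableSpace α] (μ : Measure α) (f : α → ℝ) : Prop :=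
  Measurable f ∧ (∀ x, 0 ≤ f x) ∧ ∫ x, f x ∂μ = 1

/-- `F` is a *PDF total* set of probability density functions w.r.t. `μ`:
every element of `F` is a PDF, and the convex span of `F` is dense (in `L¹`
norm) in the set of all PDFs. -/
def PDFTotal {α : Type*} [MeasurableSpace α] (μ : Measure α) (F : Set (α → ℝ)) : Prop :=
  (∀ f ∈ F, IsPDF μ f) ∧
  ∀ h : α → ℝ, IsPDF μ h → ∀ ε : ℝ, 0 < ε →
    ∃ (M : ℕ) (f : Fin M → (α → ℝ)) (w : Fin M → ℝ),
      (∀ i, f i ∈ F) ∧ (∀ i, 0 ≤ w i) ∧ (∑ i, w i = 1) ∧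
      ∫ x, |h x - ∑ i, w i * f i x| ∂μ < ε

section L1

variable {α : Type*} [MeasurableSpace α] {μ : Measure α}

theorem integral_abs_sub_le_add {f g h : α → ℝ} (hf : Integrable f μ) (hg : Integrable g μ)
    (hh : Integrable h μ) :
    ∫ x, |f x - h x| ∂μ ≤ ∫ x, |f x - g x| ∂μ + ∫ x, |g x - h x| ∂μ := by
  have hfg : Integrable (fun x => |f x - g x|) μ := (hf.sub hg).abs
  have hgh : Integrable (fun x => |g x - h x|) μ := (hg.sub hh).abs
  rw [← integral_add hfg hgh]
  exact integral_mono (hf.sub hh).abs (hfg.add hgh) fun x => abs_sub_le (f x) (g x) (h x)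

theorem IsPDF.integrable {f : α → ℝ} (hf : IsPDF μ f) : Integrable f μ := by
  by_contra h
  exact one_ne_zero (hf.2.2.symm.trans (integral_undef h))

theorem convex_setOf_integrable : Convex ℝ {f : α → ℝ | Integrable f μ} :=
  fun _ hf _ hg a b _ _ _ => (hf.smul a).add (hg.smul b)

theorem convex_setOf_isPDF : Convex ℝ {f : α → ℝ | IsPDF μ f} := by
  intro f hf g hg a b ha hb hab
  refine ⟨(hf.1.const_smul a).add (hg.1.const_smul b), fun x => ?_, ?_⟩
  · exact add_nonneg (mul_nonneg ha (hf.2.1 x)) (mul_nonneg hb (hg.2.1 x))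
  · simp only [Pi.add_apply, Pi.smul_apply, smul_eq_mul]
    rw [integral_add (hf.integrable.const_mul a) (hg.integrable.const_mul b),
      integral_const_mul, integral_const_mul, hf.2.2, hg.2.2, mul_one, mul_one, hab]

theorem IsPDF.abs_integral_sub_one_le {h g : α → ℝ} (hh : IsPDF μ h) (hg : Integrable g μ) :
    |∫ x, g x ∂μ - 1| ≤ ∫ x, |h x - g x| ∂μ := by
  rw [← hh.2.2, ← integral_sub hg hh.integrable]
  refine abs_integral_le_integral_abs.trans_eq (integral_congr_ae ?_)
  exact Filter.Eventually.of_forall fun x => abs_sub_comm _ _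

/-- The scale `W` is pinned down by the error itself: `|W - 1| ≤ ∫ |h - W g|`. -/
theorem IsPDF.integral_abs_sub_le_two_mul {h g : α → ℝ} (hh : IsPDF μ h) (hg : IsPDF μ g)
    (W : ℝ) : ∫ x, |h x - g x| ∂μ ≤ 2 * ∫ x, |h x - W * g x| ∂μ := by
  have hWg : Integrable (fun x => W * g x) μ := hg.integrable.const_mul W
  have hW : |W - 1| ≤ ∫ x, |h x - W * g x| ∂μ := by
    simpa only [integral_const_mul, hg.2.2, mul_one] using hh.abs_integral_sub_one_le hWg
  calc ∫ x, |h x - g x| ∂μ ≤ ∫ x, |h x - W * g x| ∂μ + ∫ x, |W * g x - g x| ∂μ :=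
        integral_abs_sub_le_add hh.integrable hWg hg.integrable
    _ = ∫ x, |h x - W * g x| ∂μ + |W - 1| := by
        simp_rw [← sub_one_mul, abs_mul, abs_of_nonneg (hg.2.1 _)]
        rw [integral_const_mul, hg.2.2, mul_one]
    _ ≤ 2 * ∫ x, |h x - W * g x| ∂μ := by linarith

end L1

section ConvexL1Closure

variable {α : Type*} [MeasurableSpace α] {μ : Measure α}

/-- Integrability is part of the definition since otherwise `∫ |h - g|` may be a junk `0`. -/
def convexL1Closure (μ : Measure α) (G : Set (α → ℝ)) : Set (α → ℝ) :=
  {h | Integrable h μ ∧ ∀ ε > 0, ∃ g ∈ convexHull ℝ G, ∫ x, |h x - g x| ∂μ < ε}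

theorem pdfTotal_iff {F : Set (α → ℝ)} :
    PDFTotal μ F ↔ (∀ f ∈ F, IsPDF μ f) ∧ ∀ h, IsPDF μ h → h ∈ convexL1Closure μ F := by
  refine and_congr_right fun _ => forall₂_congr fun h hh => ?_
  simp only [convexL1Closure, Set.mem_ofPred_eq, hh.integrable, true_and]
  refine forall₂_congr fun ε _ => ⟨?_, ?_⟩
  · rintro ⟨M, f, w, hf, hw, hw1, herr⟩
    refine ⟨∑ i, w i • f i, (convex_convexHull ℝ F).sum_mem (fun i _ => hw i) hw1
      fun i _ => subset_convexHull ℝ F (hf i), ?_⟩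
    simpa only [Finset.sum_apply, Pi.smul_apply, smul_eq_mul] using herr
  · rintro ⟨g, hg, herr⟩
    obtain ⟨ι, _, w, f, hw, hw1, hf, rfl⟩ := mem_convexHull_iff_exists_fintype.mp hg
    let e := Fintype.equivFin ι
    refine ⟨Fintype.card ι, f ∘ e.symm, w ∘ e.symm, fun i => hf _, fun i => hw _, ?_, ?_⟩
    · rwa [Function.comp_def, e.symm.sum_comp w]
    · convert herr using 5 with x
      simp only [Function.comp_apply, Finset.sum_apply, Pi.smul_apply, smul_eq_mul]
      exact e.symm.sum_comp fun i => w i * f i x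

variable {G G' : Set (α → ℝ)}

theorem integrable_of_mem_convexHull (hG : ∀ g ∈ G, Integrable g μ) {g : α → ℝ}
    (hg : g ∈ convexHull ℝ G) : Integrable g μ :=
  convexHull_min hG convex_setOf_integrable hg

theorem convex_convexL1Closure (hG : ∀ g ∈ G, Integrable g μ) :
    Convex ℝ (convexL1Closure μ G) := by
  rintro h₁ ⟨hh₁, H₁⟩ h₂ ⟨hh₂, H₂⟩ a b ha hb hab
  refine ⟨(hh₁.smul a).add (hh₂.smul b), fun ε hε => ?_⟩
  obtain ⟨g₁, hg₁, herr₁⟩ := H₁ ε hε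
  obtain ⟨g₂, hg₂, herr₂⟩ := H₂ ε hε
  have hint₁ : Integrable (fun x => |h₁ x - g₁ x|) μ :=
    (hh₁.sub (integrable_of_mem_convexHull hG hg₁)).abs
  have hint₂ : Integrable (fun x => |h₂ x - g₂ x|) μ :=
    (hh₂.sub (integrable_of_mem_convexHull hG hg₂)).abs
  refine ⟨a • g₁ + b • g₂, convex_convexHull ℝ G hg₁ hg₂ ha hb hab, ?_⟩
  have hpt : ∀ x, |(a • h₁ + b • h₂) x - (a • g₁ + b • g₂) x|
      ≤ a * |h₁ x - g₁ x| + b * |h₂ x - g₂ x| := fun x => by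
    simp only [Pi.add_apply, Pi.smul_apply, smul_eq_mul]
    rw [← abs_of_nonneg ha, ← abs_of_nonneg hb, ← abs_mul, ← abs_mul, abs_of_nonneg ha,
      abs_of_nonneg hb]
    exact (abs_add_le _ _).trans_eq' (by ring_nf)
  set e := max (∫ x, |h₁ x - g₁ x| ∂μ) (∫ x, |h₂ x - g₂ x| ∂μ)
  calc ∫ x, |(a • h₁ + b • h₂) x - (a • g₁ + b • g₂) x| ∂μ
      ≤ ∫ x, (a * |h₁ x - g₁ x| + b * |h₂ x - g₂ x|) ∂μ :=
        integral_mono_of_nonneg (Filter.Eventually.of_forall fun x => abs_nonneg _)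
          ((hint₁.const_mul a).add (hint₂.const_mul b)) (Filter.Eventually.of_forall hpt)
    _ = a * ∫ x, |h₁ x - g₁ x| ∂μ + b * ∫ x, |h₂ x - g₂ x| ∂μ := by
        rw [integral_add (hint₁.const_mul a) (hint₂.const_mul b), integral_const_mul,
          integral_const_mul]
    _ ≤ a * e + b * e := by gcongr; exacts [le_max_left _ _, le_max_right _ _]
    _ < ε := by rw [← add_mul, hab, one_mul]; exact max_lt herr₁ herr₂

theorem mem_convexL1Closure_of_forall_exists (hG : ∀ g ∈ G, Integrable g μ) {h : α → ℝ}
    (hh : Integrable h μ)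
    (H : ∀ ε > 0, ∃ h' ∈ convexL1Closure μ G, ∫ x, |h x - h' x| ∂μ < ε) :
    h ∈ convexL1Closure μ G := by
  refine ⟨hh, fun ε hε => ?_⟩
  obtain ⟨h', ⟨hh', H'⟩, herr⟩ := H (ε / 2) (half_pos hε)
  obtain ⟨g, hg, herr'⟩ := H' (ε / 2) (half_pos hε)
  refine ⟨g, hg, ?_⟩
  calc ∫ x, |h x - g x| ∂μ ≤ ∫ x, |h x - h' x| ∂μ + ∫ x, |h' x - g x| ∂μ :=
        integral_abs_sub_le_add hh hh' (integrable_of_mem_convexHull hG hg)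
    _ < ε := by linarith

theorem convexL1Closure_subset_of_subset (hG : ∀ g ∈ G, Integrable g μ)
    (hG' : G' ⊆ convexL1Closure μ G) : convexL1Closure μ G' ⊆ convexL1Closure μ G := by
  rintro h ⟨hh, H⟩
  refine mem_convexL1Closure_of_forall_exists hG hh fun ε hε => ?_
  obtain ⟨g, hg, herr⟩ := H ε hε
  exact ⟨g, convexHull_min hG' (convex_convexL1Closure hG) hg, herr⟩

theorem IsPDF.mem_convexL1Closure_of_nonneg_sums {β : Type*} (hG : ∀ g ∈ G, IsPDF μ g)
    {h : α → ℝ} (hh : IsPDF μ h)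
    (H : ∀ ε > 0, ∃ (S : Finset β) (c : β → ℝ) (P : β → α → ℝ), (∀ m ∈ S, 0 ≤ c m) ∧
      (∀ m ∈ S, P m ∈ G) ∧ ∫ x, |h x - ∑ m ∈ S, c m * P m x| ∂μ < ε) :
    h ∈ convexL1Closure μ G := by
  refine ⟨hh.integrable, fun ε hε => ?_⟩
  obtain ⟨S, c, P, hc, hP, herr⟩ := H (min (ε / 2) 1) (by positivity)
  set W := ∑ m ∈ S, c m
  have hint : ∫ x, ∑ m ∈ S, c m * P m x ∂μ = W := by
    rw [integral_finsetSum _ fun m hm => (hG _ (hP m hm)).integrable.const_mul _]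
    exact Finset.sum_congr rfl fun m hm => by rw [integral_const_mul, (hG _ (hP m hm)).2.2, mul_one]
  have hW : 0 < W := by
    have := hint ▸ hh.abs_integral_sub_one_le
      (integrable_finsetSum S fun m hm => (hG _ (hP m hm)).integrable.const_mul (c m))
    linarith [neg_abs_le (W - 1), min_le_right (ε / 2) 1]
  have hg₀ : S.centerMass c P ∈ convexHull ℝ G := S.centerMass_mem_convexHull hc hW hP
  refine ⟨_, hg₀, ?_⟩
  have hWg₀ : ∀ x, W * S.centerMass c P x = ∑ m ∈ S, c m * P m x := fun x => by
    simp only [Finset.centerMass, Pi.smul_apply, Finset.sum_apply, smul_eq_mul]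
    rw [← mul_assoc, mul_inv_cancel₀ hW.ne', one_mul]
  calc ∫ x, |h x - S.centerMass c P x| ∂μ ≤ 2 * ∫ x, |h x - W * S.centerMass c P x| ∂μ :=
        hh.integral_abs_sub_le_two_mul (convexHull_min hG convex_setOf_isPDF hg₀) W
    _ < ε := by simp only [hWg₀]; linarith [min_le_left (ε / 2) 1]

end ConvexL1Closure

section TensorProduct

variable {ι E : Type*} [Fintype ι]

def tensorProd (f : ι → E → ℝ) (x : ι → E) : ℝ := ∏ i, f i (x i)

variable (ι) in
def tensorPowerSet (F : Set (E → ℝ)) : Set ((ι → E) → ℝ) :=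
  {g | ∃ f : ι → E → ℝ, (∀ i, f i ∈ F) ∧ g = tensorProd f}

theorem tensorProd_mem_convexHull {F : Set (E → ℝ)} {q : ι → E → ℝ}
    (hq : ∀ i, q i ∈ convexHull ℝ F) : tensorProd q ∈ convexHull ℝ (tensorPowerSet ι F) := by
  classical
  choose κ _ w z hw hw1 hz hq using fun i => mem_convexHull_iff_exists_fintype.mp (hq i)
  have hexpand : tensorProd q =
      ∑ c : (i : ι) → κ i, (∏ i, w i (c i)) • tensorProd fun i => z i (c i) := by
    ext x
    simp only [tensorProd, ← hq, Finset.sum_apply, Pi.smul_apply, smul_eq_mul,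
      Fintype.prod_sum, Finset.prod_mul_distrib]
  rw [hexpand]
  refine (convex_convexHull ℝ _).sum_mem (fun c _ => Finset.prod_nonneg fun i _ => hw i _) ?_
    fun c _ => subset_convexHull ℝ _ ⟨fun i => z i (c i), fun i => hz i _, rfl⟩
  rw [← Fintype.prod_sum]
  exact Finset.prod_eq_one fun i _ => hw1 i

/-- The `i`-th summand is `|aᵢ - bᵢ| * ∏_{j<i} aⱼ * ∏_{j>i} bⱼ`, written as a single product so
that it integrates factorwise. -/
theorem abs_prod_sub_prod_le [LinearOrder ι] {a b : ι → ℝ} (ha : ∀ i, 0 ≤ a i)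
    (hb : ∀ i, 0 ≤ b i) :
    |∏ i, a i - ∏ i, b i| ≤
      ∑ i, ∏ j, (if j < i then a j else if i < j then b j else |a j - b j|) := by
  have hsplit : ∀ i, ∏ j, (if j < i then a j else if i < j then b j else |a j - b j|) =
      |a i - b i| * (∏ j with j < i, a j) * ∏ j with i < j, b j := fun i => by
    rw [Finset.prod_ite, Finset.prod_ite, Finset.filter_filter, Finset.filter_filter,
      Finset.filter_congr fun j _ =>
        show ¬j < i ∧ i < j ↔ i < j from ⟨And.right, fun h => ⟨h.not_gt, h⟩⟩,
      Finset.filter_congr fun j _ =>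
        show ¬j < i ∧ ¬i < j ↔ j = i by rw [not_lt, not_lt, le_antisymm_iff, and_comm],
      Finset.filter_eq' Finset.univ i, if_pos (Finset.mem_univ i), Finset.prod_singleton]
    ring
  have htelescope := Finset.prod_add_ordered Finset.univ b (a - b)
  simp only [Pi.sub_apply, add_sub_cancel] at htelescope
  rw [htelescope, add_sub_cancel_left]
  refine (Finset.abs_sum_le_sum_abs _ _).trans_eq (Finset.sum_congr rfl fun i _ => ?_)
  rw [hsplit, abs_mul, abs_mul, abs_of_nonneg (Finset.prod_nonneg fun j _ => ha j),
    abs_of_nonneg (Finset.prod_nonneg fun j _ => hb j)]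

variable [MeasureSpace E] [SigmaFinite (volume : Measure E)]

theorem isPDF_tensorProd {f : ι → E → ℝ} (hf : ∀ i, IsPDF volume (f i)) :
    IsPDF volume (tensorProd f) := by
  refine ⟨Finset.measurable_prod _ fun i _ => (hf i).1.comp (measurable_pi_apply i),
    fun x => Finset.prod_nonneg fun i _ => (hf i).2.1 _, ?_⟩
  change ∫ x : ι → E, ∏ i, f i (x i) = 1
  rw [integral_fintype_prod_volume_eq_prod f]
  exact Finset.prod_eq_one fun i _ => (hf i).2.2

theorem isPDF_of_mem_tensorPowerSet {F : Set (E → ℝ)} (hF : ∀ f ∈ F, IsPDF volume f)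
    {g : (ι → E) → ℝ} (hg : g ∈ tensorPowerSet ι F) : IsPDF volume g := by
  obtain ⟨f, hf, rfl⟩ := hg
  exact isPDF_tensorProd fun i => hF _ (hf i)

theorem integral_abs_tensorProd_sub_le {f g : ι → E → ℝ} (hf : ∀ i, IsPDF volume (f i))
    (hg : ∀ i, IsPDF volume (g i)) :
    ∫ x, |tensorProd f x - tensorProd g x| ≤ ∑ i, ∫ y, |f i y - g i y| := by
  classical
  let _ : LinearOrder ι := LinearOrder.lift' _ (Fintype.equivFin ι).injective
  set u : ι → ι → E → ℝ := fun i j y =>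
    if j < i then f j y else if i < j then g j y else |f j y - g j y|
  have hu : ∀ i j, Integrable (u i j) := fun i j => by
    simp only [u]
    split_ifs
    exacts [(hf j).integrable, (hg j).integrable,
      ((hf j).integrable.sub (hg j).integrable).abs]
  have hprod : ∀ i, Integrable fun x : ι → E => ∏ j, u i j (x j) :=
    fun i => Integrable.fintype_prod (hu i)
  have hint : ∀ i, ∫ x : ι → E, ∏ j, u i j (x j) = ∫ y, |f i y - g i y| := fun i => by
    rw [integral_fintype_prod_volume_eq_prod, Finset.prod_eq_single i]
    · simp [u]
    · intro j _ hji
      rcases hji.lt_or_gt with h | h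
      · simp [u, h, (hf j).2.2]
      · simp [u, h, h.not_gt, (hg j).2.2]
    · simp
  calc ∫ x, |tensorProd f x - tensorProd g x|
      ≤ ∫ x : ι → E, ∑ i, ∏ j, u i j (x j) :=
        integral_mono_of_nonneg (Filter.Eventually.of_forall fun x => abs_nonneg _)
          (integrable_finsetSum _ fun i _ => hprod i)
          (Filter.Eventually.of_forall fun x =>
            abs_prod_sub_prod_le (fun i => (hf i).2.1 (x i)) fun i => (hg i).2.1 (x i))
    _ = ∑ i, ∫ y, |f i y - g i y| := by
        rw [integral_finsetSum _ fun i _ => hprod i]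
        exact Finset.sum_congr rfl fun i _ => hint i

theorem tensorProd_mem_convexL1Closure {F : Set (E → ℝ)} (hF : ∀ f ∈ F, IsPDF volume f)
    {h : ι → E → ℝ} (hh : ∀ i, IsPDF volume (h i)) (hmem : ∀ i, h i ∈ convexL1Closure volume F) :
    tensorProd h ∈ convexL1Closure volume (tensorPowerSet ι F) := by
  refine ⟨(isPDF_tensorProd hh).integrable, fun ε hε => ?_⟩
  have hδ : 0 < ε / (Fintype.card ι + 1) := by positivity
  choose q hq herr using fun i => (hmem i).2 _ hδ
  refine ⟨tensorProd q, tensorProd_mem_convexHull hq, ?_⟩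
  calc ∫ x, |tensorProd h x - tensorProd q x|
      ≤ ∑ i, ∫ y, |h i y - q i y| :=
        integral_abs_tensorProd_sub_le hh fun i => convexHull_min hF convex_setOf_isPDF (hq i)
    _ ≤ ∑ _i : ι, ε / (Fintype.card ι + 1) := Finset.sum_le_sum fun i _ => (herr i).le
    _ < ε := by
        rw [Finset.sum_const, Finset.card_univ, nsmul_eq_mul, mul_div_assoc']
        rw [div_lt_iff₀ (by positivity)]
        nlinarith

end TensorProduct

theorem IsPDF.exists_continuous_nonneg_integral_abs_sub_le {α : Type*} [TopologicalSpace α]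
    [NormalSpace α] [R1Space α] [WeaklyLocallyCompactSpace α] [MeasurableSpace α] [BorelSpace α]
    {μ : Measure α} [μ.Regular] {h : α → ℝ} (hh : IsPDF μ h) {ε : ℝ} (hε : 0 < ε) :
    ∃ k : α → ℝ, HasCompactSupport k ∧ Continuous k ∧ (∀ x, 0 ≤ k x) ∧ Integrable k μ ∧
      ∫ x, |h x - k x| ∂μ ≤ ε := by
  obtain ⟨k, hk_supp, herr, hk_cont, hk_int⟩ :=
    hh.integrable.exists_hasCompactSupport_integral_sub_le hε
  refine ⟨fun x => max (k x) 0, hk_supp.comp_left (g := fun y => max y 0) (max_self 0),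
    hk_cont.max continuous_const, fun x => le_max_right _ _, hk_int.pos_part, herr.trans' ?_⟩
  refine integral_mono (hh.integrable.sub hk_int.pos_part).abs (hh.integrable.sub hk_int).norm
    fun x => ?_
  have := abs_max_sub_max_le_abs (h x) (k x) 0
  rwa [max_eq_left (hh.2.1 x)] at this

theorem HasCompactSupport.exists_integral_abs_sub_comp_le {X : Type*} [PseudoMetricSpace X]
    [ProperSpace X] [MeasurableSpace X] [OpensMeasurableSpace X] {μ : Measure X}
    [IsFiniteMeasureOnCompacts μ] {k : X → ℝ} (hk : HasCompactSupport k) (hk_cont : Continuous k)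
    {ε : ℝ} (hε : 0 < ε) :
    ∃ δ > 0, ∀ φ : X → X, (∀ x, dist (φ x) x ≤ δ) → ∫ x, |k x - k (φ x)| ∂μ ≤ ε := by
  set K := Metric.cthickening 1 (tsupport k)
  have hK : IsCompact K := hk.isCompact.cthickening
  set η := ε / (μ.real K + 1)
  obtain ⟨δ, hδ, hδk⟩ := Metric.uniformContinuous_iff.mp
    (hk.uniformContinuous_of_continuous hk_cont) η (by positivity)
  refine ⟨min (δ / 2) 1, by positivity, fun φ hφ => ?_⟩
  have hpt : ∀ x, |k x - k (φ x)| ≤ K.indicator (fun _ => η) x := fun x => by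
    by_cases hx : x ∈ K
    · rw [Set.indicator_of_mem hx, ← Real.dist_eq, dist_comm]
      exact (hδk ((hφ x).trans_lt (by linarith [min_le_left (δ / 2) 1]))).le
    · have hφx : φ x ∉ tsupport k := fun hφx => hx <| Metric.mem_cthickening_of_dist_le x (φ x)
        1 _ hφx ((dist_comm _ _).trans_le ((hφ x).trans (min_le_right _ _)))
      rw [Set.indicator_of_notMem hx, image_eq_zero_of_notMem_tsupport hφx,
        image_eq_zero_of_notMem_tsupport fun h => hx (Metric.self_subset_cthickening _ h),
        sub_zero, abs_zero]
  calc ∫ x, |k x - k (φ x)| ∂μ ≤ ∫ x, K.indicator (fun _ => η) x ∂μ :=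
        integral_mono_of_nonneg (Filter.Eventually.of_forall fun x => abs_nonneg _)
          ((integrable_indicator_iff Metric.isClosed_cthickening.measurableSet).mpr
            (integrableOn_const hK.measure_lt_top.ne))
          (Filter.Eventually.of_forall hpt)
    _ = μ.real K * η := by
        rw [integral_indicator_const _ Metric.isClosed_cthickening.measurableSet, smul_eq_mul]
    _ ≤ ε := by
        rw [mul_div_assoc', div_le_iff₀ (by positivity)]
        nlinarith [measureReal_nonneg (μ := μ) (s := K)]

noncomputable section Grid

def intervalDensity (n : ℕ) (a : ℤ) : ℝ → ℝ :=
  (Set.Ico ((a : ℝ) / n) ((a + 1) / n)).indicator fun _ => (n : ℝ)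

variable {n : ℕ}

theorem intervalDensity_eq_ite (hn : 0 < n) (a : ℤ) (t : ℝ) :
    intervalDensity n a t = if ⌊t * n⌋ = a then (n : ℝ) else 0 := by
  have hn' : (0 : ℝ) < n := Nat.cast_pos.mpr hn
  simp only [intervalDensity, Set.indicator_apply, Set.mem_Ico, Int.floor_eq_iff,
    div_le_iff₀ hn', lt_div_iff₀ hn']

theorem isPDF_intervalDensity (hn : 0 < n) (a : ℤ) : IsPDF volume (intervalDensity n a) := by
  have hn' : (0 : ℝ) < n := Nat.cast_pos.mpr hn
  refine ⟨measurable_const.indicator measurableSet_Ico,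
    Set.indicator_nonneg fun _ _ => hn'.le, ?_⟩
  rw [intervalDensity, integral_indicator_const _ measurableSet_Ico, measureReal_def,
    Real.volume_Ico, ← sub_div, add_sub_cancel_left, ENNReal.toReal_ofReal (by positivity),
    smul_eq_mul, one_div_mul_cancel hn'.ne']

variable {ι κ : Type*} [Fintype ι] [Fintype κ]

def cubeDensity (n : ℕ) (m : ι → κ → ℤ) : (ι → κ → ℝ) → ℝ :=
  tensorProd fun i => tensorProd fun j => intervalDensity n (m i j)

theorem isPDF_cubeDensity (hn : 0 < n) (m : ι → κ → ℤ) : IsPDF volume (cubeDensity n m) :=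
  isPDF_tensorProd fun i => isPDF_tensorProd fun j => isPDF_intervalDensity hn (m i j)

def gridIndex (n : ℕ) (x : ι → κ → ℝ) : ι → κ → ℤ := fun i j => ⌊x i j * n⌋

def gridPoint (n : ℕ) (m : ι → κ → ℤ) : ι → κ → ℝ := fun i j => m i j / n

theorem cubeDensity_eq_ite (hn : 0 < n) (m : ι → κ → ℤ) (x : ι → κ → ℝ) :
    cubeDensity n m x =
      if gridIndex n x = m then (n : ℝ) ^ (Fintype.card κ * Fintype.card ι) else 0 := by
  simp only [cubeDensity, tensorProd, intervalDensity_eq_ite hn]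
  split_ifs with hm
  · subst hm
    simp [gridIndex, Finset.prod_const, pow_mul]
  · obtain ⟨i, j, hij⟩ : ∃ i j, ⌊x i j * n⌋ ≠ m i j := by
      by_contra! H
      exact hm (funext₂ H)
    exact Finset.prod_eq_zero (Finset.mem_univ i)
      (Finset.prod_eq_zero (Finset.mem_univ j) (if_neg hij))

theorem dist_gridPoint_gridIndex_le (hn : 0 < n) (x : ι → κ → ℝ) :
    dist (gridPoint n (gridIndex n x)) x ≤ 1 / n := by
  have hn' : (0 : ℝ) < n := Nat.cast_pos.mpr hn
  refine (dist_pi_le_iff (by positivity)).mpr fun i => (dist_pi_le_iff (by positivity)).mpr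
    fun j => ?_
  have hle : (⌊x i j * n⌋ : ℝ) / n ≤ x i j := (div_le_iff₀ hn').mpr (Int.floor_le _)
  have hlt : x i j < (⌊x i j * n⌋ : ℝ) / n + 1 / n := by
    rw [← add_div, lt_div_iff₀ hn']
    exact Int.lt_floor_add_one _
  rw [Real.dist_eq, abs_le]
  constructor <;> simp only [gridPoint, gridIndex] <;> linarith

open Classical in
def gridBox (n : ℕ) (R : ℝ) : Finset (ι → κ → ℤ) :=
  Fintype.piFinset fun _ => Fintype.piFinset fun _ => Finset.Icc (-⌈R * n⌉) ⌈R * n⌉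

theorem mem_gridBox_of_norm_gridPoint_le (hn : 0 < n) {R : ℝ} {m : ι → κ → ℤ}
    (hm : ‖gridPoint n m‖ ≤ R) : m ∈ gridBox n R := by
  have hn' : (0 : ℝ) < n := Nat.cast_pos.mpr hn
  simp only [gridBox, Fintype.mem_piFinset, Finset.mem_Icc, ← abs_le]
  intro i j
  have hmij : |(m i j : ℝ)| / n ≤ R := by
    rw [← abs_of_pos hn', ← abs_div, ← Real.norm_eq_abs]
    exact (norm_le_pi_norm (gridPoint n m i) j).trans ((norm_le_pi_norm (gridPoint n m) i).trans hm)
  rw [div_le_iff₀ hn'] at hmij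
  exact_mod_cast hmij.trans (Int.le_ceil _)

theorem comp_gridPoint_gridIndex_eq_sum (hn : 0 < n) {k : (ι → κ → ℝ) → ℝ} {R : ℝ}
    (hk : ∀ y, R < ‖y‖ → k y = 0) (x : ι → κ → ℝ) :
    k (gridPoint n (gridIndex n x)) = ∑ m ∈ gridBox n R,
      k (gridPoint n m) / (n : ℝ) ^ (Fintype.card κ * Fintype.card ι) * cubeDensity n m x := by
  have hc : (n : ℝ) ^ (Fintype.card κ * Fintype.card ι) ≠ 0 := by positivity
  simp only [cubeDensity_eq_ite hn, mul_ite, mul_zero, Finset.sum_ite_eq, div_mul_cancel₀ _ hc]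
  split_ifs with hx
  · rfl
  · exact hk _ (not_le.mp fun h => hx (mem_gridBox_of_norm_gridPoint_le hn h))

end Grid

theorem IsPDF.mem_convexL1Closure_tensorPowerSet {ι κ : Type*} [Fintype ι] [Fintype κ]
    {h : (ι → κ → ℝ) → ℝ} (hh : IsPDF volume h) :
    h ∈ convexL1Closure volume (tensorPowerSet ι {p : (κ → ℝ) → ℝ | IsPDF volume p}) := by
  refine hh.mem_convexL1Closure_of_nonneg_sums (β := ι → κ → ℤ)
    (fun g => isPDF_of_mem_tensorPowerSet fun _ => id) fun ε hε => ?_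
  have : (volume : Measure (ι → κ → ℝ)).Regular :=
    Measure.Regular.of_sigmaCompactSpace_of_isLocallyFiniteMeasure _
  obtain ⟨k, hk_supp, hk_cont, hk_nonneg, hk_int, hhk⟩ :=
    hh.exists_continuous_nonneg_integral_abs_sub_le (half_pos hε)
  obtain ⟨δ, hδ, hkδ⟩ :=
    hk_supp.exists_integral_abs_sub_comp_le (μ := volume) hk_cont (by positivity : 0 < ε / 4)
  obtain ⟨n, hn⟩ := exists_nat_one_div_lt hδ
  obtain ⟨R, -, hR⟩ := hk_supp.exists_pos_le_norm
  have hn₀ : 0 < n + 1 := n.succ_pos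
  have hsnap : ∀ x : ι → κ → ℝ, dist (gridPoint (n + 1) (gridIndex (n + 1) x)) x ≤ δ := fun x =>
    (dist_gridPoint_gridIndex_le hn₀ x).trans (by exact_mod_cast hn.le)
  refine ⟨gridBox (n + 1) R,
    fun m => k (gridPoint (n + 1) m) / ((n + 1 : ℕ) : ℝ) ^ (Fintype.card κ * Fintype.card ι),
    cubeDensity (n + 1), fun m _ => div_nonneg (hk_nonneg _) (by positivity),
    fun m _ => ⟨_, fun i => isPDF_tensorProd fun j => isPDF_intervalDensity hn₀ _, rfl⟩, ?_⟩
  simp_rw [← comp_gridPoint_gridIndex_eq_sum hn₀ fun y hy => hR y hy.le]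
  have hsnap_int : Integrable fun x => k (gridPoint (n + 1) (gridIndex (n + 1) x)) := by
    simp_rw [comp_gridPoint_gridIndex_eq_sum hn₀ fun y hy => hR y hy.le]
    exact integrable_finsetSum _ fun m _ => (isPDF_cubeDensity hn₀ m).integrable.const_mul _
  calc ∫ x, |h x - k (gridPoint (n + 1) (gridIndex (n + 1) x))|
      ≤ (∫ x, |h x - k x|) + ∫ x, |k x - k (gridPoint (n + 1) (gridIndex (n + 1) x))| :=
        integral_abs_sub_le_add hh.integrable hk_int hsnap_int
    _ < ε := by linarith [hkδ _ hsnap]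

/-- **PDF totality is preserved under products.**  If `F` is a PDF total set of
densities over `ℝ^s`, then `F^{⊗N} = {(x₁,…,x_N) ↦ ∏ᵢ fᵢ(xᵢ) : fᵢ ∈ F}` is a
PDF total set of densities over the product space `(ℝ^s)^N`. -/
theorem statement4 {s N : ℕ} (F : Set ((Fin s → ℝ) → ℝ))
    (hF : PDFTotal (volume : Measure (Fin s → ℝ)) F) :
    PDFTotal (volume : Measure (Fin N → Fin s → ℝ))
      {g | ∃ f : Fin N → ((Fin s → ℝ) → ℝ),
            (∀ i, f i ∈ F) ∧ g = fun x => ∏ i, f i (x i)} := by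
  change PDFTotal volume (tensorPowerSet (Fin N) F)
  rw [pdfTotal_iff] at hF ⊢
  obtain ⟨hF_pdf, hF_dense⟩ := hF
  refine ⟨fun g hg => isPDF_of_mem_tensorPowerSet hF_pdf hg, fun h hh => ?_⟩
  have hprod : tensorPowerSet (Fin N) {p | IsPDF volume p} ⊆
      convexL1Closure volume (tensorPowerSet (Fin N) F) := by
    rintro _ ⟨p, hp, rfl⟩
    exact tensorProd_mem_convexL1Closure hF_pdf hp fun i => hF_dense _ (hp i)
  have hF_int : ∀ g ∈ tensorPowerSet (Fin N) F, Integrable g :=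
    fun g hg => (isPDF_of_mem_tensorPowerSet hF_pdf hg).integrable
  exact convexL1Closure_subset_of_subset hF_int hprod hh.mem_convexL1Closure_tensorPowerSet
end

section
/- For every N = 2^L, M, and ranks r₀,…,r_{L−1}, there exists a configuration of HT-decomposition parameters satisfying the simplex constraints (a^{0,j,α} ∈ Δ^{M−1}, a^{l,j,γ} ∈ Δ^{r_{l−1}−1}, a^L ∈ Δ^{r_{L−1}−1}), with shared parameters a^{l,j,γ} = a^{l,γ} across j, such that the matricization of the generated tensor A^y has matrix rank at least r^{N/2}, where r := min{r₀, M}. -/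
open Finset

/-- Interleaving of two index tuples: position `k` of the result is `i (k/2)`
if `k` is even and `j (k/2)` if `k` is odd.  Thus `i` provides the odd modes
(1-based) and `j` the even modes of an order-`2n` tensor index. -/
def interleave {M n : ℕ} (i j : Fin n → Fin M) : Fin (2 * n) → Fin M :=
  fun k =>
    if (k : ℕ) % 2 = 0 then i ⟨(k : ℕ) / 2, by have := k.2; omega⟩
    else j ⟨(k : ℕ) / 2, by have := k.2; omega⟩

/-- The matricization `[A]` of an order-`2n` tensor `A` with dimension `M` in
each mode: the `M^n × M^n` matrix (rows indexed by the odd modes, columns by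
the even modes, both in big-endian order). -/
def matricize {M n : ℕ} (A : (Fin (2 * n) → Fin M) → ℝ) :
    Matrix (Fin n → Fin M) (Fin n → Fin M) ℝ :=
  fun i j => A (interleave i j)

/-- The tensors `φ^{l,j,γ}` generated by the Hierarchical Tucker recursion:
`φ^{0,j,γ} = a^{0,j,γ} ∈ ℝ^M` and
`φ^{l+1,j,γ} = Σ_{α < r_l} a^{l+1,j,γ}_α · φ^{l,2j,α} ⊗ φ^{l,2j+1,α}`
(0-based children).  `a0 j γ` are the level-0 vectors and `a l j γ α` the
decomposition coefficients. -/
noncomputable def HTtensor {M : ℕ} (r : ℕ → ℕ) (a0 : ℕ → ℕ → Fin M → ℝ)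
    (a : ℕ → ℕ → ℕ → ℕ → ℝ) :
    (l : ℕ) → ℕ → ℕ → (Fin (2 ^ l) → Fin M) → ℝ
  | 0, j, γ => fun d => a0 j γ (d ⟨0, Nat.one_pos⟩)
  | (l + 1), j, γ => fun d =>
      ∑ α ∈ Finset.range (r l), a (l + 1) j γ α *
        (HTtensor r a0 a l (2 * j) α
            (fun i => d ⟨i.1, lt_of_lt_of_le i.2 (Nat.pow_le_pow_right (by norm_num) l.le_succ)⟩) *
         HTtensor r a0 a l (2 * j + 1) α
            (fun i => d ⟨2 ^ l + i.1, by
              have h := i.2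
              have h2 : 2 ^ (l + 1) = 2 ^ l + 2 ^ l := by rw [pow_succ]; ring
              omega⟩))

/-!
Take `a^{0,j,γ} = e_γ`, let level 1 average `e_α ⊗ e_α` over `α < s = min r₀ M`, and let
every higher level keep only `α = 0`. Then `φ^{1}` is the diagonal matrix
`D = diag(1/s, …, 1/s, 0, …)` of rank `s`, each higher `φ^{l}` is a tensor product of copies
of `D`, and since the matricization pairs mode `2i - 1` with mode `2i`, `[A^y]` is the
Kronecker power `D^{⊗ N/2}`, of rank `s^{N/2}`.
-/

open Matrix

theorem Matrix.rank_of_prod_diagonal {m n K : Type*} [Fintype m] [DecidableEq m] [Fintype n]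
    [DecidableEq n] [Field K] [DecidableEq K] (w : m → K) :
    (of fun i j : n → m => ∏ k, diagonal w (i k) (j k)).rank =
      Fintype.card {x // w x ≠ 0} ^ Fintype.card n := by
  have hdiag : (of fun i j : n → m => ∏ k, diagonal w (i k) (j k)) =
      diagonal fun i => ∏ k, w (i k) := by
    ext i j
    by_cases hij : i = j
    · subst hij
      simp
    · obtain ⟨k, hk⟩ := Function.ne_iff.mp hij
      rw [of_apply, diagonal_apply_ne _ hij,
        prod_eq_zero (mem_univ k) (diagonal_apply_ne w hk)]
  simp_rw [hdiag, rank_diagonal, prod_ne_zero_iff, mem_univ, true_implies]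
  rw [Fintype.card_congr (Equiv.subtypePiEquivPi (p := fun _ x => w x ≠ 0)), Fintype.card_fun]

theorem interleave_two_mul {M n : ℕ} (i j : Fin n → Fin M) (k : Fin n)
    (h : 2 * (k : ℕ) < 2 * n) : interleave i j ⟨2 * k, h⟩ = i k := by
  simp [interleave]

theorem interleave_two_mul_add_one {M n : ℕ} (i j : Fin n → Fin M) (k : Fin n)
    (h : 2 * (k : ℕ) + 1 < 2 * n) : interleave i j ⟨2 * k + 1, h⟩ = j k := by
  simp only [interleave, Nat.mul_add_mod_self_left, Nat.one_mod, one_ne_zero, if_false]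
  exact congrArg j (Fin.ext (by dsimp only; omega))

section HTtensor

variable {M : ℕ} {r : ℕ → ℕ} {a0 : ℕ → ℕ → Fin M → ℝ} {a : ℕ → ℕ → ℕ → ℕ → ℝ}

theorem HTtensor_succ_eq_prod (g : Fin M → Fin M → ℝ) (hr : ∀ l, 0 < r l)
    (ha : ∀ l j γ α, 2 ≤ l → a l j γ α = if α = 0 then 1 else 0)
    (h1 : ∀ j γ (d : ℕ → Fin M), HTtensor r a0 a 1 j γ (fun k => d k) = g (d 0) (d 1))
    (l j γ : ℕ) (d : ℕ → Fin M) :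
    HTtensor r a0 a (l + 1) j γ (fun k => d k) =
      ∏ i ∈ range (2 ^ l), g (d (2 * i)) (d (2 * i + 1)) := by
  induction l generalizing j γ d with
  | zero => simpa using h1 j γ d
  | succ l ih =>
    have ha' : ∀ α, a (l + 2) j γ α = if α = 0 then 1 else 0 :=
      fun α => ha _ _ _ α le_add_self
    rw [HTtensor]
    dsimp only
    rw [sum_eq_single_of_mem 0 (mem_range.2 (hr _)) fun α _ hα => by simp [ha', hα], ha',
      if_pos rfl, one_mul, ih, ih (d := fun k => d (2 ^ (l + 1) + k)), pow_succ, mul_two,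
      prod_range_add]
    congr 2 with i
    simp only [mul_add, ← add_assoc, two_mul]

theorem matricize_HTtensor_eq_of_prod {L : ℕ} (hL : 1 ≤ L) (g : Fin M → Fin M → ℝ)
    (hT : ∀ d : ℕ → Fin M, HTtensor r a0 a L 0 0 (fun k => d k) =
      ∏ i ∈ range (2 ^ (L - 1)), g (d (2 * i)) (d (2 * i + 1))) :
    matricize (fun d : Fin (2 * 2 ^ (L - 1)) → Fin M =>
        HTtensor r a0 a L 0 0
          (fun k => d (Fin.cast (by rw [← pow_succ', Nat.sub_add_cancel hL]) k))) =
      of fun i j => ∏ k, g (i k) (j k) := by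
  have hN : 2 ^ L = 2 * 2 ^ (L - 1) := by rw [← pow_succ', Nat.sub_add_cancel hL]
  ext i j
  set D : ℕ → Fin M :=
    Function.extend Fin.val (interleave i j) fun _ => i ⟨0, by positivity⟩
  have hD : ∀ m (hm : m < 2 * 2 ^ (L - 1)), D m = interleave i j ⟨m, hm⟩ :=
    fun m hm => Fin.val_injective.extend_apply _ _ ⟨m, hm⟩
  have hcast : (fun k => interleave i j (Fin.cast hN k)) = fun k : Fin (2 ^ L) => D k :=
    funext fun k => (hD k (hN ▸ k.2)).symm
  rw [matricize, of_apply, hcast, hT, ← Fin.prod_univ_eq_prod_range]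
  refine prod_congr rfl fun k _ => ?_
  rw [hD _ (by omega), hD _ (by omega), interleave_two_mul, interleave_two_mul_add_one]

end HTtensor

def InSimplex (n : ℕ) (x : ℕ → ℝ) : Prop :=
  (∀ α, α < n → 0 ≤ x α) ∧ ∑ α ∈ range n, x α = 1

theorem inSimplex_single_zero {n : ℕ} (hn : 0 < n) :
    InSimplex n fun α => if α = 0 then 1 else 0 :=
  ⟨fun α _ => by positivity, by simp [hn]⟩

noncomputable def uniformWeight (s α : ℕ) : ℝ := if α < s then (s : ℝ)⁻¹ else 0

theorem inSimplex_uniformWeight {n s : ℕ} (hs : 0 < s) (hsn : s ≤ n) :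
    InSimplex n (uniformWeight s) := by
  refine ⟨fun α _ => by unfold uniformWeight; positivity, ?_⟩
  simp_rw [uniformWeight, ← mem_range (n := s), sum_ite_mem,
    inter_eq_right.mpr (range_subset_range.mpr hsn), sum_const, card_range, nsmul_eq_mul]
  exact mul_inv_cancel₀ (by positivity)

theorem card_uniformWeight_ne_zero {M s : ℕ} (hs : 0 < s) (hsM : s ≤ M) :
    Fintype.card {m : Fin M // uniformWeight s m ≠ 0} = s := by
  rw [Fintype.card_subtype]
  simp [uniformWeight, hs.ne', Fin.card_filter_val_lt, hsM]

-- The `% M` still picks a unit vector for `γ ≥ M`, needed when `r₀ > M`.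
def basisVec (M γ : ℕ) : Fin M → ℝ := fun m => if (m : ℕ) = γ % M then 1 else 0

theorem basisVec_nonneg (M γ : ℕ) (m : Fin M) : 0 ≤ basisVec M γ m := by
  unfold basisVec
  positivity

theorem sum_basisVec {M : ℕ} (hM : 0 < M) (γ : ℕ) : ∑ m, basisVec M γ m = 1 := by
  rw [Fintype.sum_eq_single (f := basisVec M γ) ⟨γ % M, Nat.mod_lt γ hM⟩
    fun m hm => if_neg (Fin.val_ne_iff.mpr hm)]
  simp [basisVec]

noncomputable def diagonalHTCoeff (s : ℕ) : ℕ → ℕ → ℕ → ℕ → ℝ :=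
  fun l _ _ α => if l = 1 then uniformWeight s α else if α = 0 then 1 else 0

theorem diagonalHTCoeff_inSimplex {r : ℕ → ℕ} (hr : ∀ l, 0 < r l) {s : ℕ} (hs : 0 < s)
    (hsr : s ≤ r 0) (l j γ : ℕ) : InSimplex (r (l - 1)) (diagonalHTCoeff s l j γ) := by
  by_cases hl : l = 1
  · subst hl
    exact inSimplex_uniformWeight hs hsr
  · rw [show diagonalHTCoeff s l j γ = fun α => if α = 0 then 1 else 0 from
      funext fun _ => if_neg hl]
    exact inSimplex_single_zero (hr _)

theorem HTtensor_one_diagonalHTCoeff {M s : ℕ} (r : ℕ → ℕ) (hsr : s ≤ r 0) (hsM : s ≤ M)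
    (j γ : ℕ) (d : ℕ → Fin M) :
    HTtensor r (fun _ γ => basisVec M γ) (diagonalHTCoeff s) 1 j γ (fun k => d k) =
      diagonal (fun m : Fin M => uniformWeight s m) (d 0) (d 1) := by
  simp only [HTtensor, diagonalHTCoeff, if_true]
  rw [← sum_subset (range_subset_range.2 hsr) fun α _ hα => by simp_all [uniformWeight]]
  have hbasis : ∀ α ∈ range s, ∀ m : Fin M, basisVec M α m = if (m : ℕ) = α then 1 else 0 :=
    fun α hα m => by rw [basisVec, Nat.mod_eq_of_lt (by simp at hα; omega)]
  rw [sum_congr rfl fun α hα => by rw [hbasis α hα, hbasis α hα]]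
  simp only [mul_ite, mul_one, mul_zero, sum_ite_eq, mem_range, diagonal_apply, Fin.val_inj]
  split_ifs <;> simp_all [uniformWeight]

/-- **Existence of HT parameters, satisfying the simplex constraints and shared
across spatial positions, whose tensor has matricization rank at least
`r^{N/2}`, `r = min{r₀, M}`** (the existence part of the depth-efficiency
theorem for generative ConvACs).  The tensor `A^y = φ^{L,1,1}` has order
`N = 2^L`; the top vector `a^L` is represented as the level-`L` coefficient
vector (with a single choice of `j` and `γ`). -/
theorem statement14 (L M : ℕ) (hL : 1 ≤ L) (hM : 1 ≤ M)
    (r : ℕ → ℕ) (hr : ∀ l, 1 ≤ r l) :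
    ∃ (a0 : ℕ → ℕ → Fin M → ℝ) (a : ℕ → ℕ → ℕ → ℕ → ℝ),
      -- level-0 vectors lie in Δ^{M-1}
      (∀ j γ, j < 2 ^ L → γ < r 0 →
        (∀ m, 0 ≤ a0 j γ m) ∧ ∑ m, a0 j γ m = 1) ∧
      -- level-l coefficient vectors (1 ≤ l ≤ L) lie in Δ^{r_{l-1}-1};
      -- level L is the top vector a^L ∈ Δ^{r_{L-1}-1}
      (∀ l j γ, 1 ≤ l → l ≤ L → j < 2 ^ (L - l) → γ < (if l = L then 1 else r l) →
        (∀ α, α < r (l - 1) → 0 ≤ a l j γ α) ∧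
        ∑ α ∈ Finset.range (r (l - 1)), a l j γ α = 1) ∧
      -- the parameters are shared: a^{l,j,γ} = a^{l,γ}
      (∀ l j j' γ, a l j γ = a l j' γ) ∧
      -- the matricization of the generated tensor has rank at least r^{N/2}
      (min (r 0) M) ^ (2 ^ (L - 1)) ≤
        (matricize (fun d : Fin (2 * 2 ^ (L - 1)) → Fin M =>
          HTtensor r a0 a L 0 0 (fun k =>
            d (Fin.cast (by rw [← pow_succ', Nat.sub_add_cancel hL]) k)))).rank := by
  obtain ⟨l, rfl⟩ : ∃ l, L = l + 1 := ⟨L - 1, by omega⟩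
  set s := min (r 0) M
  have hs : 0 < s := lt_min (hr 0) hM
  have hsr : s ≤ r 0 := min_le_left _ _
  have hsM : s ≤ M := min_le_right _ _
  have hT := HTtensor_succ_eq_prod (a := diagonalHTCoeff s) _ hr
    (fun _ _ _ _ hl => if_neg (by omega)) (HTtensor_one_diagonalHTCoeff r hsr hsM) l 0 0
  refine ⟨fun _ γ => basisVec M γ, diagonalHTCoeff s,
    fun _ γ _ _ => ⟨basisVec_nonneg M γ, sum_basisVec hM γ⟩,
    fun l j γ _ _ _ _ => diagonalHTCoeff_inSimplex hr hs hsr l j γ, fun _ _ _ _ => rfl, ?_⟩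
  rw [matricize_HTtensor_eq_of_prod hL _ hT, rank_of_prod_diagonal,
    card_uniformWeight_ne_zero hs hsM, Fintype.card_fin]
end
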